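/- Let v₁=(0,1,1), v₂=(-1,1,1), v₃=(-1,-1,1), v₄=(2,-1,1) in ℤ³ (type 8b). For each of the integer vectors u = (0,0,1,0), (0,0,1,1), (0,0,2,0), (0,0,2,1), (0,0,3,0), (0,0,3,1), (0,0,4,1), there exists y ∈ ℝ³ such that uᵢ − 1 < ⟨y, vᵢ⟩ ≤ uᵢ for all i = 1,…,4. (Witnesses: y = (−1/2,−1/2,−1/4), (0,−1/2,−1/8), (−5/8,−5/8,−1/8), (−1/4,−3/4,1/4), (−7/8,−9/8,1/4), (−5/8,−5/4,3/8), (−3/4,−13/8,3/4) respectively.) Moreover, for u = (0,0,4,0) no such y ∈ ℝ³ exists. Hence over the toric singularity of type 8b the divisorial ideals T(0,0,1,0), T(0,0,1,1), T(0,0,2,0), T(0,0,2,1), T(0,0,3,0), T(0,0,3,1), T(0,0,4,1) are conic, while T(0,0,4,0) is not conic. -/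

import Mathlib

/-- The pairing ⟨y, v⟩ = ∑ⱼ yⱼ vⱼ of a real vector y ∈ ℝ³ with an integer vector v ∈ ℤ³. -/
noncomputable def pair3 (y : Fin 3 → ℝ) (v : Fin 3 → ℤ) : ℝ :=
  ∑ j, y j * (v j : ℝ)

/-- `u ∈ ℤⁿ` is conic with respect to `v₁,…,vₙ ∈ ℤ³` if there is `y ∈ ℝ³` with
`uᵢ − 1 < ⟨y, vᵢ⟩ ≤ uᵢ` for all `i`.  By Bruns' criterion this holds iff the
divisorial ideal `T(u)` over the associated toric singularity is conic. -/
def IsConic {n : ℕ} (v : Fin n → Fin 3 → ℤ) (u : Fin n → ℤ) : Prop :=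
  ∃ y : Fin 3 → ℝ, ∀ i, (u i : ℝ) - 1 < pair3 y (v i) ∧ pair3 y (v i) ≤ (u i : ℝ)

/-- The ray generators of type 8b: v1=(0,1,1), v2=(-1,1,1), v3=(-1,-1,1), v4=(2,-1,1). -/
def type8b : Fin 4 → Fin 3 → ℤ :=
  ![![0, 1, 1], ![-1, 1, 1], ![-1, -1, 1], ![2, -1, 1]]

/-!
The seven witnesses are checked directly. For `u = (0,0,4,0)` the generators satisfy the
linear relation `3 v₂ + v₄ = 3 v₁ + v₃`, so `3⟨y,v₂⟩ + ⟨y,v₄⟩ = 3⟨y,v₁⟩ + ⟨y,v₃⟩` for every `y`;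
the bounds force the left side to be `≤ 0` and the right side to be `> 3·(-1) + 3 = 0`.
-/

theorem pair3_apply (y : Fin 3 → ℝ) (v : Fin 3 → ℤ) :
    pair3 y v = y 0 * v 0 + y 1 * v 1 + y 2 * v 2 :=
  Fin.sum_univ_three _

theorem pair3_add (y : Fin 3 → ℝ) (v w : Fin 3 → ℤ) :
    pair3 y (v + w) = pair3 y v + pair3 y w := by
  simp only [pair3_apply, Pi.add_apply, Int.cast_add]
  ring

theorem pair3_zsmul (y : Fin 3 → ℝ) (c : ℤ) (v : Fin 3 → ℤ) :
    pair3 y (c • v) = c * pair3 y v := by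
  simp only [pair3_apply, Pi.smul_apply, smul_eq_mul, Int.cast_mul]
  ring

theorem type8b_relation : (3 : ℤ) • type8b 1 + type8b 3 = (3 : ℤ) • type8b 0 + type8b 2 := by
  decide

theorem not_isConic_type8b_0040 : ¬ IsConic type8b ![0, 0, 4, 0] := by
  rintro ⟨y, hy⟩
  have hrel := congrArg (pair3 y) type8b_relation
  simp only [pair3_add, pair3_zsmul, Int.cast_ofNat] at hrel
  obtain ⟨h₁, -⟩ := hy 0
  obtain ⟨-, h₂⟩ := hy 1
  obtain ⟨h₃, -⟩ := hy 2
  obtain ⟨-, h₄⟩ := hy 3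
  norm_num [Matrix.cons_val_two, Matrix.cons_val_three, Matrix.tail_cons,
    Matrix.head_cons] at h₁ h₂ h₃ h₄
  linarith

theorem type8b_conic_classification :
    IsConic type8b ![0, 0, 1, 0] ∧
      IsConic type8b ![0, 0, 1, 1] ∧
      IsConic type8b ![0, 0, 2, 0] ∧
      IsConic type8b ![0, 0, 2, 1] ∧
      IsConic type8b ![0, 0, 3, 0] ∧
      IsConic type8b ![0, 0, 3, 1] ∧
      IsConic type8b ![0, 0, 4, 1] ∧
      ¬ IsConic type8b ![0, 0, 4, 0] := by
  refine ⟨⟨![-1/2, -1/2, -1/4], ?_⟩, ⟨![0, -1/2, -1/8], ?_⟩, ⟨![-5/8, -5/8, -1/8], ?_⟩,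
    ⟨![-1/4, -3/4, 1/4], ?_⟩, ⟨![-7/8, -9/8, 1/4], ?_⟩, ⟨![-5/8, -5/4, 3/8], ?_⟩,
    ⟨![-3/4, -13/8, 3/4], ?_⟩, not_isConic_type8b_0040⟩ <;>
  · intro i
    fin_cases i <;> norm_num [pair3_apply, type8b, Matrix.cons_val_two, Matrix.tail_cons]
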